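/- arXiv:1701.07497 — 3 statements merged into one kernel-verified Lean document; each statement's English description precedes it below -/
import Mathlib

section
/- Let λ be a strict partition and k ≥ 1. For a strict partition ν contained in λ, the skew diagram λ∖ν is a removable single k-ribbon of λ if and only if the set of parts of ν is obtained from the set of parts of λ either (a) by replacing one part p > k by p − k, where p − k is not a part of λ, or (b) by deleting one part equal to k. In case (a) the head of the ribbon has diagonal value p, and in case (b) it has diagonal value k. Consequently, for m ≥ 0, λ admits a removable single k-ribbon whose head has diagonal value m + k if and only if m + k is a part of λ and m is not a part of λ, and in that case the ribbon (equivalently ν) is unique. -/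
/-!
In the shifted diagram of a strict partition `s`, diagonal `d ≥ 1` is occupied exactly in the rows
`1, …, countGe s d`, where `countGe s d` counts the parts `≥ d`; in particular `s` is determined by
`countGe s` on `d ≥ 1`. So `λ∖ν` has its cells on diagonal `d` in the rows
`countGe ν d < i ≤ countGe λ d`. Distinct diagonal values allow at most one cell per diagonal, and
since an edge changes the diagonal value by at most one, edge-connectedness makes the occupied
diagonals an interval, `(q, q + k]` when there are `k` cells. Hence
`countGe ν = countGe λ - 1_{(q, q + k]}`: `ν` arises from `λ` by lowering the part `q + k` to `q`,
which forces `q + k ∈ λ` and `q ∉ λ`. Conversely, for such `q` the skew diagram consists of the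
lowest cells of `λ` on the diagonals in `(q, q + k]`, a chain of adjacent cells whose head lies on
diagonal `q + k`.
-/

def IsStrictPartition (s : Finset ℕ) : Prop := ∀ x ∈ s, 0 < x

/-- The `i`-th largest part of `s` (1-indexed); `0` if out of range. -/
def nthPart (s : Finset ℕ) (i : ℕ) : ℕ := (s.sort (· ≤ ·)).reverse.getD (i - 1) 0

/-- The shifted diagram: row `i` (1-indexed) has cells `(i, j)` with `i ≤ j ≤ i + λᵢ - 1`. -/
def shiftedDiagram (s : Finset ℕ) : Set (ℕ × ℕ) :=
  {c | 1 ≤ c.1 ∧ c.1 ≤ c.2 ∧ c.2 + 1 ≤ c.1 + nthPart s c.1}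

def skewDiag (lam nu : Finset ℕ) : Set (ℕ × ℕ) := shiftedDiagram lam \ shiftedDiagram nu

/-- Diagonal value `j - i + 1` of a cell `(i, j)`. -/
def diagVal (c : ℕ × ℕ) : ℕ := c.2 + 1 - c.1

def CellAdj (c d : ℕ × ℕ) : Prop :=
  (c.1 = d.1 ∧ (c.2 + 1 = d.2 ∨ d.2 + 1 = c.2)) ∨
  (c.2 = d.2 ∧ (c.1 + 1 = d.1 ∨ d.1 + 1 = c.1))

def EdgeConnected (S : Set (ℕ × ℕ)) : Prop :=
  ∀ c ∈ S, ∀ d ∈ S, Relation.ReflTransGen (fun x y => CellAdj x y ∧ x ∈ S ∧ y ∈ S) c d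

def IsHead (S : Set (ℕ × ℕ)) (c : ℕ × ℕ) : Prop :=
  c ∈ S ∧ ∀ d ∈ S, diagVal d ≤ diagVal c

def IsTail (S : Set (ℕ × ℕ)) (c : ℕ × ℕ) : Prop :=
  c ∈ S ∧ ∀ d ∈ S, diagVal c ≤ diagVal d

def IsRemovableSingleRibbon (lam nu : Finset ℕ) (k : ℕ) : Prop :=
  IsStrictPartition lam ∧ IsStrictPartition nu ∧
  shiftedDiagram nu ⊆ shiftedDiagram lam ∧
  (skewDiag lam nu).ncard = k ∧
  EdgeConnected (skewDiag lam nu) ∧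
  Set.InjOn diagVal (skewDiag lam nu)

def IsDoubleDecomp (lam nu : Finset ℕ) (R S : Set (ℕ × ℕ)) : Prop :=
  IsStrictPartition lam ∧ IsStrictPartition nu ∧
  shiftedDiagram nu ⊆ shiftedDiagram lam ∧
  Disjoint R S ∧ R ∪ S = skewDiag lam nu ∧
  R.Nonempty ∧ EdgeConnected R ∧ Set.InjOn diagVal R ∧
  S.Nonempty ∧ EdgeConnected S ∧ Set.InjOn diagVal S ∧
  S.ncard ≤ R.ncard ∧
  (∃ a, IsTail R (a, a)) ∧ (∃ b, IsTail S (b, b)) ∧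
  (∃ mu : Finset ℕ, IsStrictPartition mu ∧ shiftedDiagram mu = shiftedDiagram lam \ R)

def IsRemovableDoubleRibbon (lam nu : Finset ℕ) (k : ℕ) : Prop :=
  (skewDiag lam nu).ncard = k ∧ ∃ R S, IsDoubleDecomp lam nu R S

def IsRemovableRibbon (lam nu : Finset ℕ) (k : ℕ) : Prop :=
  IsRemovableSingleRibbon lam nu k ∨ IsRemovableDoubleRibbon lam nu k

lemma IsStrictPartition.zero_notMem {s : Finset ℕ} (hs : IsStrictPartition s) : 0 ∉ s :=
  fun h0 => (hs 0 h0).false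

open Finset in
def countGe (s : Finset ℕ) (d : ℕ) : ℕ := #{x ∈ s | d ≤ x}

section countGe

variable {s t : Finset ℕ} {d : ℕ}

lemma countGe_antitone (s : Finset ℕ) : Antitone (countGe s) :=
  fun _ _ h => Finset.card_le_card fun x hx => by
    simp only [Finset.mem_filter] at hx ⊢; exact ⟨hx.1, h.trans hx.2⟩

lemma countGe_pos_of_mem {x : ℕ} (hx : x ∈ s) (hd : d ≤ x) : 0 < countGe s d :=
  Finset.card_pos.2 ⟨x, Finset.mem_filter.2 ⟨hx, hd⟩⟩

lemma countGe_eq_countGe_succ_add (s : Finset ℕ) (d : ℕ) :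
    countGe s d = countGe s (d + 1) + if d ∈ s then 1 else 0 := by
  have hsplit : ({x ∈ s | d ≤ x} : Finset ℕ) = {x ∈ s | d + 1 ≤ x} ∪ {x ∈ s | x = d} := by
    ext x; simp only [Finset.mem_union, Finset.mem_filter]; grind
  rw [countGe, hsplit, Finset.card_union_of_disjoint, Finset.filter_eq' s d]
  · split_ifs <;> rfl
  · exact Finset.disjoint_filter.2 fun x _ h => by omega

lemma mem_iff_countGe_succ_lt : d ∈ s ↔ countGe s (d + 1) < countGe s d := by
  rw [countGe_eq_countGe_succ_add s d]; split_ifs with h <;> simp [h]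

lemma eq_of_countGe_eq (hs : 0 ∉ s) (ht : 0 ∉ t) (h : ∀ d, 1 ≤ d → countGe s d = countGe t d) :
    s = t := by
  ext x
  rcases Nat.eq_zero_or_pos x with rfl | hx
  · simp [hs, ht]
  · rw [mem_iff_countGe_succ_lt, mem_iff_countGe_succ_lt, h x hx, h (x + 1) (by omega)]

lemma countGe_insert {a : ℕ} (ha : a ∉ s) (d : ℕ) :
    countGe (insert a s) d = countGe s d + if d ≤ a then 1 else 0 := by
  rw [countGe, Finset.filter_insert]
  split_ifs with h
  · rw [Finset.card_insert_of_notMem (fun hm => ha (Finset.mem_of_mem_filter _ hm))]; rfl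
  · rfl

lemma countGe_erase {a : ℕ} (ha : a ∈ s) (d : ℕ) :
    countGe (s.erase a) d + (if d ≤ a then 1 else 0) = countGe s d := by
  rw [← countGe_insert (Finset.notMem_erase a s), Finset.insert_erase ha]

lemma countGe_erase_zero (hd : 1 ≤ d) : countGe (s.erase 0) d = countGe s d := by
  rw [countGe, countGe, Finset.filter_erase, Finset.erase_eq_of_notMem]
  simp only [Finset.mem_filter, not_and]
  omega

end countGe

lemma List.Pairwise.le_getD_iff_lt_length_filter {l : List ℕ} (hl : l.Pairwise (· ≥ ·))
    {d : ℕ} (hd : 1 ≤ d) (n : ℕ) : d ≤ l.getD n 0 ↔ n < (l.filter (d ≤ ·)).length := by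
  induction l generalizing n with
  | nil => simp; omega
  | cons a l ih =>
    rw [List.pairwise_cons] at hl
    by_cases had : d ≤ a
    · cases n
      · simp [had]
      · simp only [List.getD_cons_succ, ih hl.2, List.filter_cons, had]; simp
    · have hnil : (a :: l).filter (d ≤ ·) = [] :=
        List.filter_eq_nil_iff.2 fun x hx h => had <| (of_decide_eq_true h).trans <|
          (List.forall_mem_cons (p := (· ≤ a))).2 ⟨le_rfl, hl.1⟩ x hx
      have hle : (a :: l).getD n 0 ≤ a := by
        rcases n with _ | n
        · simp
        · rw [List.getD_cons_succ]
          rcases lt_or_ge n l.length with hn | hn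
          · rw [List.getD_eq_getElem _ _ hn]; exact hl.1 _ (l.getElem_mem hn)
          · rw [List.getD_eq_default _ _ hn]; omega
      rw [hnil, List.length_nil]
      omega

lemma le_nthPart_iff (s : Finset ℕ) {i d : ℕ} (hi : 1 ≤ i) (hd : 1 ≤ d) :
    d ≤ nthPart s i ↔ i ≤ countGe s d := by
  have hsorted : (s.sort (· ≤ ·)).reverse.Pairwise (· ≥ ·) :=
    List.pairwise_reverse.2 (Finset.pairwise_sort s _)
  have hlength : ((s.sort (· ≤ ·)).filter (d ≤ ·)).length = countGe s d := by
    rw [countGe, Finset.card_def, Finset.filter_val, ← Finset.sort_eq s (· ≤ ·),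
      Multiset.filter_coe, Multiset.coe_card]
  rw [nthPart, hsorted.le_getD_iff_lt_length_filter hd, List.filter_reverse, List.length_reverse,
    hlength]
  omega

lemma mem_shiftedDiagram {s : Finset ℕ} {i j : ℕ} :
    (i, j) ∈ shiftedDiagram s ↔ 1 ≤ i ∧ i ≤ j ∧ i ≤ countGe s (j + 1 - i) := by
  show 1 ≤ i ∧ i ≤ j ∧ j + 1 ≤ i + nthPart s i ↔ _
  refine and_congr_right fun hi => and_congr_right fun hij => ?_
  rw [← le_nthPart_iff s hi (by omega)]
  omega

lemma shiftedDiagram_subset_iff {s t : Finset ℕ} :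
    shiftedDiagram s ⊆ shiftedDiagram t ↔ ∀ d, 1 ≤ d → countGe s d ≤ countGe t d := by
  constructor
  · intro h d hd
    rcases Nat.eq_zero_or_pos (countGe s d) with h0 | hpos
    · omega
    · have hcell := @h (countGe s d, countGe s d + d - 1)
      simp only [mem_shiftedDiagram, show countGe s d + d - 1 + 1 - countGe s d = d by omega]
        at hcell
      exact (hcell ⟨hpos, by omega, le_rfl⟩).2.2
  · rintro h ⟨i, j⟩ hc
    rw [mem_shiftedDiagram] at hc ⊢
    exact ⟨hc.1, hc.2.1, hc.2.2.trans (h _ (by omega))⟩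

section skewDiag

variable {lam nu : Finset ℕ}

lemma mem_skewDiag {i j : ℕ} :
    (i, j) ∈ skewDiag lam nu ↔
      1 ≤ i ∧ i ≤ j ∧ countGe nu (j + 1 - i) < i ∧ i ≤ countGe lam (j + 1 - i) := by
  simp only [skewDiag, Set.mem_sdiff, mem_shiftedDiagram]
  omega

def bottomCell (lam : Finset ℕ) (d : ℕ) : ℕ × ℕ := (countGe lam d, countGe lam d + d - 1)

lemma diagVal_bottomCell {d : ℕ} (hd : 1 ≤ d) : diagVal (bottomCell lam d) = d := by
  simp only [diagVal, bottomCell]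
  omega

lemma mem_diagVal_image_skewDiag {d : ℕ} :
    d ∈ diagVal '' skewDiag lam nu ↔ 1 ≤ d ∧ countGe nu d < countGe lam d := by
  constructor
  · rintro ⟨⟨i, j⟩, hc, rfl⟩
    rw [mem_skewDiag] at hc
    simp only [diagVal]
    omega
  · rintro ⟨hd, hlt⟩
    refine ⟨bottomCell lam d, ?_, diagVal_bottomCell hd⟩
    rw [bottomCell, mem_skewDiag, show countGe lam d + d - 1 + 1 - countGe lam d = d by omega]
    omega

lemma injOn_diagVal_skewDiag_iff :
    Set.InjOn diagVal (skewDiag lam nu) ↔ ∀ d, 1 ≤ d → countGe lam d ≤ countGe nu d + 1 := by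
  constructor
  · intro h d hd
    by_contra! hlt
    have hmem : ∀ i, countGe nu d < i → i ≤ countGe lam d → (i, i + d - 1) ∈ skewDiag lam nu :=
      fun i h1 h2 => by rw [mem_skewDiag, show i + d - 1 + 1 - i = d by omega]; omega
    have := h (hmem (countGe nu d + 1) (by omega) (by omega))
      (hmem (countGe nu d + 2) (by omega) (by omega)) (by simp only [diagVal]; omega)
    simp only [Prod.mk.injEq] at this
    omega
  · rintro h ⟨i, j⟩ hc ⟨i', j'⟩ hc' (he : j + 1 - i = j' + 1 - i')
    rw [mem_skewDiag] at hc hc'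
    rw [← he] at hc'
    have := h (j + 1 - i) (by omega)
    simp only [Prod.mk.injEq]
    omega

lemma skewDiag_eq_image_bottomCell (h : ∀ d, 1 ≤ d → countGe lam d ≤ countGe nu d + 1) :
    skewDiag lam nu = bottomCell lam '' (diagVal '' skewDiag lam nu) := by
  rw [Set.image_image]
  nth_rewrite 1 [← Set.image_id (skewDiag lam nu)]
  refine Set.image_congr fun ⟨i, j⟩ hc => ?_
  rw [mem_skewDiag] at hc
  have := h (j + 1 - i) (by omega)
  simp only [id, bottomCell, diagVal, Prod.mk.injEq]
  omega

lemma cellAdj_bottomCell_succ {d : ℕ} (h : 0 < countGe lam (d + 1)) :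
    CellAdj (bottomCell lam d) (bottomCell lam (d + 1)) := by
  have := countGe_eq_countGe_succ_add lam d
  simp only [CellAdj, bottomCell]
  split_ifs at this <;> omega

end skewDiag

lemma CellAdj.symm {c c' : ℕ × ℕ} (h : CellAdj c c') : CellAdj c' c := by
  unfold CellAdj at *
  tauto

lemma CellAdj.diagVal_le_succ {c c' : ℕ × ℕ} (h : CellAdj c c') : diagVal c' ≤ diagVal c + 1 := by
  simp only [CellAdj, diagVal] at *
  omega

lemma EdgeConnected.ordConnected_image_diagVal {S : Set (ℕ × ℕ)} (hS : EdgeConnected S) :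
    (diagVal '' S).OrdConnected := by
  refine Set.ordConnected_iff.2 ?_
  rintro _ ⟨c, hc, rfl⟩ _ ⟨c', hc', rfl⟩ - e ⟨hce, hec'⟩
  induction hS c hc c' hc' with
  | refl => exact ⟨c, hc, by omega⟩
  | @tail x y _ hstep ih =>
    by_cases hex : e ≤ diagVal x
    · exact ih hstep.2.1 hex
    · have := hstep.1.diagVal_le_succ
      exact ⟨y, hstep.2.2, by omega⟩

lemma edgeConnected_image_of_cellAdj {φ : ℕ → ℕ × ℕ} {I : Set ℕ} (hI : I.OrdConnected)
    (hadj : ∀ d ∈ I, d + 1 ∈ I → CellAdj (φ d) (φ (d + 1))) : EdgeConnected (φ '' I) := by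
  rintro _ ⟨a, ha, rfl⟩ _ ⟨b, hb, rfl⟩
  refine Relation.ReflTransGen.lift φ (r := fun i j => CellAdj (φ i) (φ j) ∧ i ∈ I ∧ j ∈ I)
    (fun i j h => ⟨h.1, Set.mem_image_of_mem φ h.2.1, Set.mem_image_of_mem φ h.2.2⟩) a b
    (reflTransGen_of_succ _ (fun i hi => ?_) (fun i hi => ?_))
  · have hi' := hI.out ha hb ⟨hi.1, hi.2.le⟩
    have hi1 := hI.out ha hb ⟨hi.1.trans i.le_succ, hi.2⟩
    exact ⟨hadj i hi' hi1, hi', hi1⟩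
  · have hi' := hI.out hb ha ⟨hi.1, hi.2.le⟩
    have hi1 := hI.out hb ha ⟨hi.1.trans i.le_succ, hi.2⟩
    exact ⟨(hadj i hi' hi1).symm, hi1, hi'⟩

lemma isHead_iff {S : Set (ℕ × ℕ)} {c : ℕ × ℕ} :
    IsHead S c ↔ c ∈ S ∧ IsGreatest (diagVal '' S) (diagVal c) := by
  refine ⟨fun h => ⟨h.1, Set.mem_image_of_mem _ h.1, ?_⟩,
    fun h => ⟨h.1, fun d hd => h.2.2 (Set.mem_image_of_mem _ hd)⟩⟩
  rintro _ ⟨d, hd, rfl⟩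
  exact h.2 d hd

lemma exists_isHead_of_isGreatest {S : Set (ℕ × ℕ)} {m : ℕ} (h : IsGreatest (diagVal '' S) m) :
    ∃ c, IsHead S c ∧ diagVal c = m := by
  obtain ⟨c, hc, rfl⟩ := h.1
  exact ⟨c, isHead_iff.2 ⟨hc, h⟩, rfl⟩

lemma Set.OrdConnected.exists_eq_Ioc_nat {D : Set ℕ} (hD : D.OrdConnected) (h0 : 0 ∉ D)
    (hne : D.ncard ≠ 0) : ∃ q, D = Set.Ioc q (q + D.ncard) := by
  have hnonempty := Set.nonempty_of_ncard_ne_zero hne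
  obtain ⟨a, b, rfl⟩ : ∃ a b, D = Set.Icc a b :=
    ⟨_, _, (hnonempty.ordConnected_iff_of_bdd (OrderBot.bddBelow D)
      (Set.finite_of_ncard_ne_zero hne).bddAbove).1 hD⟩
  have hab : a ≤ b := Set.nonempty_Icc.1 hnonempty
  have ha : a ≠ 0 := by rintro rfl; exact h0 ⟨le_rfl, hab⟩
  refine ⟨a - 1, ?_⟩
  ext d
  simp only [Set.ncard_Icc_nat, Set.mem_Icc, Set.mem_Ioc]
  omega

-- `q = 0` covers deleting the part `k` itself.
def lowerPart (lam : Finset ℕ) (q k : ℕ) : Finset ℕ := (insert q (lam.erase (q + k))).erase 0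

section lowerPart

variable {lam nu : Finset ℕ} {q k : ℕ}

lemma isStrictPartition_lowerPart : IsStrictPartition (lowerPart lam q k) :=
  fun _ hx => Nat.pos_of_ne_zero (Finset.ne_of_mem_erase hx)

lemma countGe_lowerPart (hq : q ∉ lam) (hqk : q + k ∈ lam) {d : ℕ} (hd : 1 ≤ d) :
    countGe (lowerPart lam q k) d + (if q < d ∧ d ≤ q + k then 1 else 0) = countGe lam d := by
  rw [lowerPart, countGe_erase_zero hd, countGe_insert (fun h => hq (Finset.mem_of_mem_erase h)),
    ← countGe_erase hqk d]
  split_ifs <;> omega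

lemma image_diagVal_skewDiag_lowerPart (hq : q ∉ lam) (hqk : q + k ∈ lam) :
    diagVal '' skewDiag lam (lowerPart lam q k) = Set.Ioc q (q + k) := by
  ext d
  rw [mem_diagVal_image_skewDiag, Set.mem_Ioc]
  by_cases hd : 1 ≤ d
  · have := countGe_lowerPart hq hqk hd
    split_ifs at this <;> omega
  · omega

lemma isRemovableSingleRibbon_lowerPart (hlam : IsStrictPartition lam) (hq : q ∉ lam)
    (hqk : q + k ∈ lam) : IsRemovableSingleRibbon lam (lowerPart lam q k) k := by
  have hcount : ∀ d, 1 ≤ d → countGe (lowerPart lam q k) d ≤ countGe lam d ∧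
      countGe lam d ≤ countGe (lowerPart lam q k) d + 1 := fun d hd => by
    have := countGe_lowerPart hq hqk hd
    split_ifs at this <;> omega
  have hinj := injOn_diagVal_skewDiag_iff.2 fun d hd => (hcount d hd).2
  have himage := image_diagVal_skewDiag_lowerPart hq hqk
  refine ⟨hlam, isStrictPartition_lowerPart, shiftedDiagram_subset_iff.2 fun d hd =>
    (hcount d hd).1, ?_, ?_, hinj⟩
  · rw [← hinj.ncard_image, himage, Set.ncard_Ioc_nat]
    omega
  · rw [skewDiag_eq_image_bottomCell fun d hd => (hcount d hd).2, himage]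
    exact edgeConnected_image_of_cellAdj Set.ordConnected_Ioc fun d _ hd1 =>
      cellAdj_bottomCell_succ (countGe_pos_of_mem hqk hd1.2)

lemma diagVal_eq_of_isHead_lowerPart (hq : q ∉ lam) (hqk : q + k ∈ lam) {c : ℕ × ℕ}
    (hc : IsHead (skewDiag lam (lowerPart lam q k)) c) : diagVal c = q + k := by
  have hk : k ≠ 0 := by rintro rfl; exact hq hqk
  rw [isHead_iff, image_diagVal_skewDiag_lowerPart hq hqk] at hc
  exact hc.2.unique (isGreatest_Ioc (by omega))

lemma exists_isHead_lowerPart (hq : q ∉ lam) (hqk : q + k ∈ lam) :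
    ∃ c, IsHead (skewDiag lam (lowerPart lam q k)) c ∧ diagVal c = q + k := by
  have hk : k ≠ 0 := by rintro rfl; exact hq hqk
  refine exists_isHead_of_isGreatest ?_
  rw [image_diagVal_skewDiag_lowerPart hq hqk]
  exact isGreatest_Ioc (by omega)

lemma eq_lowerPart_of_countGe (hlam : IsStrictPartition lam) (hnu : IsStrictPartition nu)
    (hk : 1 ≤ k)
    (h : ∀ d, 1 ≤ d → countGe nu d + (if q < d ∧ d ≤ q + k then 1 else 0) = countGe lam d) :
    q ∉ lam ∧ q + k ∈ lam ∧ nu = lowerPart lam q k := by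
  have hqk : q + k ∈ lam := by
    have h1 := h (q + k) (by omega)
    have h2 := h (q + k + 1) (by omega)
    have h3 := countGe_antitone nu (by omega : q + k ≤ q + k + 1)
    rw [mem_iff_countGe_succ_lt]
    split_ifs at h1 h2 <;> omega
  have hq : q ∉ lam := by
    intro hmem
    rcases Nat.eq_zero_or_pos q with rfl | hq0
    · exact hlam.zero_notMem hmem
    · have h1 := h q hq0
      have h2 := h (q + 1) (by omega)
      have h3 := countGe_eq_countGe_succ_add lam q
      have h4 := countGe_eq_countGe_succ_add nu q
      rw [if_pos hmem] at h3
      split_ifs at h1 h2 h4 <;> omega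
  refine ⟨hq, hqk, eq_of_countGe_eq hnu.zero_notMem isStrictPartition_lowerPart.zero_notMem
    fun d hd => ?_⟩
  have := h d hd
  have := countGe_lowerPart hq hqk hd
  omega

lemma exists_eq_lowerPart_of_isRemovableSingleRibbon (hk : 1 ≤ k)
    (h : IsRemovableSingleRibbon lam nu k) :
    ∃ q, q ∉ lam ∧ q + k ∈ lam ∧ nu = lowerPart lam q k := by
  obtain ⟨hlam, hnu, hsub, hcard, hconn, hinj⟩ := h
  have hD : (diagVal '' skewDiag lam nu).ncard = k := by
    rw [hinj.ncard_image, hcard]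
  obtain ⟨q, hq⟩ := hconn.ordConnected_image_diagVal.exists_eq_Ioc_nat
    (fun h0 => by simpa using (mem_diagVal_image_skewDiag.1 h0).1) (by omega)
  rw [hD] at hq
  refine ⟨q, eq_lowerPart_of_countGe hlam hnu hk fun d hd => ?_⟩
  have h1 := shiftedDiagram_subset_iff.1 hsub d hd
  have h2 := injOn_diagVal_skewDiag_iff.1 hinj d hd
  have h3 := mem_diagVal_image_skewDiag (lam := lam) (nu := nu) (d := d)
  rw [hq, Set.mem_Ioc] at h3
  split_ifs with hd'
  · have := h3.1 hd'
    omega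
  · have := mt h3.2 hd'
    omega

lemma isRemovableSingleRibbon_iff_exists_lowerPart (hlam : IsStrictPartition lam) (hk : 1 ≤ k) :
    IsRemovableSingleRibbon lam nu k ↔ ∃ q, q ∉ lam ∧ q + k ∈ lam ∧ nu = lowerPart lam q k :=
  ⟨exists_eq_lowerPart_of_isRemovableSingleRibbon hk, fun ⟨_, hq, hqk, hnu⟩ =>
    hnu ▸ isRemovableSingleRibbon_lowerPart hlam hq hqk⟩

lemma lowerPart_of_pos (hlam : IsStrictPartition lam) (hq : 0 < q) :
    lowerPart lam q k = insert q (lam.erase (q + k)) := by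
  refine Finset.erase_eq_of_notMem fun h0 => ?_
  rcases Finset.mem_insert.1 h0 with h0 | h0
  · omega
  · exact hlam.zero_notMem (Finset.mem_of_mem_erase h0)

lemma lowerPart_zero (hlam : IsStrictPartition lam) : lowerPart lam 0 k = lam.erase k := by
  rw [lowerPart, zero_add, Finset.erase_insert]
  exact fun h0 => hlam.zero_notMem (Finset.mem_of_mem_erase h0)

lemma exists_eq_lowerPart_iff (hlam : IsStrictPartition lam) :
    (∃ q, q ∉ lam ∧ q + k ∈ lam ∧ nu = lowerPart lam q k) ↔
      (∃ p ∈ lam, k < p ∧ p - k ∉ lam ∧ nu = insert (p - k) (lam.erase p)) ∨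
        (k ∈ lam ∧ nu = lam.erase k) := by
  constructor
  · rintro ⟨q, hq, hqk, rfl⟩
    rcases Nat.eq_zero_or_pos q with rfl | hq0
    · exact Or.inr ⟨by simpa using hqk, lowerPart_zero hlam⟩
    · refine Or.inl ⟨q + k, hqk, by omega, by simpa using hq, ?_⟩
      rw [Nat.add_sub_cancel, lowerPart_of_pos hlam hq0]
  · rintro (⟨p, hp, hkp, hpk, rfl⟩ | ⟨hk, rfl⟩)
    · refine ⟨p - k, hpk, by rwa [Nat.sub_add_cancel hkp.le], ?_⟩
      rw [lowerPart_of_pos hlam (by omega), Nat.sub_add_cancel hkp.le]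
    · exact ⟨0, hlam.zero_notMem, by simpa using hk, (lowerPart_zero hlam).symm⟩

end lowerPart

theorem stmt1_general (k : ℕ) (hk : 1 ≤ k) (lam nu : Finset ℕ)
    (hlam : IsStrictPartition lam) :
    (IsRemovableSingleRibbon lam nu k ↔
      ((∃ p ∈ lam, k < p ∧ p - k ∉ lam ∧ nu = insert (p - k) (lam.erase p)) ∨
       (k ∈ lam ∧ nu = lam.erase k))) ∧
    (∀ p ∈ lam, k < p → p - k ∉ lam → nu = insert (p - k) (lam.erase p) →
       ∀ c, IsHead (skewDiag lam nu) c → diagVal c = p) ∧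
    ((k ∈ lam ∧ nu = lam.erase k) →
       ∀ c, IsHead (skewDiag lam nu) c → diagVal c = k) ∧
    (∀ m : ℕ,
      ((∃ nu' : Finset ℕ, IsRemovableSingleRibbon lam nu' k ∧
          ∃ c, IsHead (skewDiag lam nu') c ∧ diagVal c = m + k) ↔
        (m + k ∈ lam ∧ m ∉ lam)) ∧
      (∀ nu₁ nu₂ : Finset ℕ,
        IsRemovableSingleRibbon lam nu₁ k →
        (∃ c, IsHead (skewDiag lam nu₁) c ∧ diagVal c = m + k) →
        IsRemovableSingleRibbon lam nu₂ k →
        (∃ c, IsHead (skewDiag lam nu₂) c ∧ diagVal c = m + k) →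
        nu₁ = nu₂)) := by
  have hribbon := fun nu' => isRemovableSingleRibbon_iff_exists_lowerPart (nu := nu') hlam hk
  refine ⟨(hribbon nu).trans (exists_eq_lowerPart_iff hlam), ?_, ?_, fun m => ⟨?_, ?_⟩⟩
  · rintro p hp hkp hpk rfl c hc
    have hp' : p - k + k = p := Nat.sub_add_cancel hkp.le
    have hnu : insert (p - k) (lam.erase p) = lowerPart lam (p - k) k := by
      rw [lowerPart_of_pos hlam (by omega), hp']
    rw [hnu] at hc
    simpa [hp'] using diagVal_eq_of_isHead_lowerPart hpk (by rwa [hp']) hc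
  · rintro ⟨hkl, rfl⟩ c hc
    rw [← lowerPart_zero hlam] at hc
    simpa using diagVal_eq_of_isHead_lowerPart hlam.zero_notMem (by simpa using hkl) hc
  · constructor
    · rintro ⟨_, hrib, c, hc, hcm⟩
      obtain ⟨q, hq, hqk, rfl⟩ := (hribbon _).1 hrib
      obtain rfl : q = m := by have := diagVal_eq_of_isHead_lowerPart hq hqk hc; omega
      exact ⟨hqk, hq⟩
    · rintro ⟨hmk, hm⟩
      exact ⟨_, isRemovableSingleRibbon_lowerPart hlam hm hmk, exists_isHead_lowerPart hm hmk⟩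
  · rintro nu₁ nu₂ hrib₁ ⟨c₁, hc₁, hcm₁⟩ hrib₂ ⟨c₂, hc₂, hcm₂⟩
    obtain ⟨q₁, hq₁, hqk₁, rfl⟩ := (hribbon _).1 hrib₁
    obtain ⟨q₂, hq₂, hqk₂, rfl⟩ := (hribbon _).1 hrib₂
    have := diagVal_eq_of_isHead_lowerPart hq₁ hqk₁ hc₁
    have := diagVal_eq_of_isHead_lowerPart hq₂ hqk₂ hc₂
    obtain rfl : q₁ = q₂ := by omega
    rfl

/-- Characterization of removable single `k`-ribbons of a strict partition
`λ` in terms of parts, the diagonal values of their heads, and existence/uniqueness of the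
ribbon with head of diagonal value `m + k`. -/
theorem stmt1 (k : ℕ) (hk : 1 ≤ k) (lam nu : Finset ℕ)
    (hlam : IsStrictPartition lam) (hnu : IsStrictPartition nu)
    (hsub : shiftedDiagram nu ⊆ shiftedDiagram lam) :
    (IsRemovableSingleRibbon lam nu k ↔
      ((∃ p ∈ lam, k < p ∧ p - k ∉ lam ∧ nu = insert (p - k) (lam.erase p)) ∨
       (k ∈ lam ∧ nu = lam.erase k))) ∧
    (∀ p ∈ lam, k < p → p - k ∉ lam → nu = insert (p - k) (lam.erase p) →
       ∀ c, IsHead (skewDiag lam nu) c → diagVal c = p) ∧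
    ((k ∈ lam ∧ nu = lam.erase k) →
       ∀ c, IsHead (skewDiag lam nu) c → diagVal c = k) ∧
    (∀ m : ℕ,
      ((∃ nu' : Finset ℕ, IsRemovableSingleRibbon lam nu' k ∧
          ∃ c, IsHead (skewDiag lam nu') c ∧ diagVal c = m + k) ↔
        (m + k ∈ lam ∧ m ∉ lam)) ∧
      (∀ nu₁ nu₂ : Finset ℕ,
        IsRemovableSingleRibbon lam nu₁ k →
        (∃ c, IsHead (skewDiag lam nu₁) c ∧ diagVal c = m + k) →
        IsRemovableSingleRibbon lam nu₂ k →
        (∃ c, IsHead (skewDiag lam nu₂) c ∧ diagVal c = m + k) →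
        nu₁ = nu₂)) :=
  stmt1_general k hk lam nu hlam
end

section
/- Let λ be a strict partition and k ≥ 1. Then λ admits no removable k-ribbon (i.e., λ is a shifted k-core) if and only if all of the following hold: k is not a part of λ; for every part p of λ with p > k, p − k is also a part of λ; and no two distinct parts of λ sum to k. (The paper phrases this as: λ has no removable k-ribbon iff no cell of its shifted diagram has hook length k.) -/
/-!
Write `λᵢ = nthPart λ i` for the row lengths. If `λ ∖ ν` is nonempty, edge-connected and meets
every diagonal at most once, it occupies consecutive rows `i₀, …, m` with `νⱼ = λⱼ₊₁` for
`i₀ ≤ j < m`: connectedness forces a vertical edge between rows `j` and `j + 1`, so `νⱼ ≤ λⱼ₊₁`,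
and if `νⱼ < λⱼ₊₁` the last cells of these two rows would lie on the same diagonal. Such a strip
covers exactly the diagonals `ν_m + 1, …, λ_{i₀}`, and `ν` is `λ` with the part `λ_{i₀}`
replaced by `ν_m` (deleted if `ν_m = 0`). Hence a single `k`-ribbon either deletes the part `k`
or lowers a part `p > k` to `p - k`, which therefore is not a part of `λ`; a tail on the main
diagonal means `ν_m = 0`, so a double `k`-ribbon deletes two distinct parts with sum `k`.
Conversely each of these three moves is realised by a strip.
-/

open Finset

namespace ShiftedCore

lemma _root_.List.le_getD_iff_lt_countP {r : List ℕ} (hr : r.Pairwise (· ≥ ·)) {v : ℕ}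
    (hv : 1 ≤ v) (i : ℕ) : v ≤ r.getD i 0 ↔ i < r.countP (v ≤ ·) := by
  induction r generalizing i with
  | nil => simp only [List.getD_nil, List.countP_nil]; omega
  | cons a t ih =>
    have hsmall : ¬ v ≤ a → t.countP (v ≤ ·) = 0 := fun hva =>
      List.countP_eq_zero.2 fun x hx => by
        have := List.rel_of_pairwise_cons hr hx
        simp only [decide_eq_true_eq]; omega
    cases i with
    | zero => by_cases hva : v ≤ a <;> simp [hva, hsmall]
    | succ i =>
      rw [List.getD_cons_succ, ih hr.of_cons, List.countP_cons]
      by_cases hva : v ≤ a <;> simp [hva, hsmall]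

def partsGe (s : Finset ℕ) (v : ℕ) : ℕ := #{x ∈ s | v ≤ x}

lemma le_nthPart_iff (s : Finset ℕ) {i v : ℕ} (hi : 1 ≤ i) (hv : 1 ≤ v) :
    v ≤ nthPart s i ↔ i ≤ partsGe s v := by
  have hsorted : (s.sort (· ≤ ·)).reverse.Pairwise (· ≥ ·) :=
    List.pairwise_reverse.2 (s.pairwise_sort (· ≤ ·))
  have hcount : (s.sort (· ≤ ·)).reverse.countP (v ≤ ·) = partsGe s v := by
    rw [List.countP_reverse, ← Multiset.coe_countP, sort_eq, Multiset.countP_eq_card_filter]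
    rfl
  rw [nthPart, List.le_getD_iff_lt_countP hsorted hv, hcount]
  omega

-- `i - 1` truncates, so the row index `0` repeats row `1`.
lemma nthPart_zero (s : Finset ℕ) : nthPart s 0 = nthPart s 1 := rfl

lemma nthPart_eq_of_le_iff {s t : Finset ℕ} {i j : ℕ}
    (h : ∀ v, 1 ≤ v → (v ≤ nthPart s i ↔ v ≤ nthPart t j)) : nthPart s i = nthPart t j := by
  by_contra hne
  rcases Nat.lt_or_gt_of_ne hne with hlt | hlt
  · have := (h _ (by omega)).2 le_rfl; omega
  · have := (h _ (by omega)).1 le_rfl; omega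

lemma partsGe_antitone (s : Finset ℕ) : Antitone (partsGe s) := fun _ _ h =>
  card_le_card (monotone_filter_right s fun _ _ hx => h.trans hx)

lemma partsGe_le_card (s : Finset ℕ) (v : ℕ) : partsGe s v ≤ s.card :=
  card_le_card (filter_subset _ _)

lemma one_le_partsGe {s : Finset ℕ} {v : ℕ} (hv : v ∈ s) : 1 ≤ partsGe s v :=
  card_pos.2 ⟨v, mem_filter.2 ⟨hv, le_rfl⟩⟩

lemma partsGe_succ_of_notMem {s : Finset ℕ} {v : ℕ} (hv : v ∉ s) :
    partsGe s (v + 1) = partsGe s v := by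
  unfold partsGe
  congr 1
  refine filter_congr fun x hx => ?_
  have : x ≠ v := by rintro rfl; exact hv hx
  omega

lemma partsGe_succ_of_mem {s : Finset ℕ} {v : ℕ} (hv : v ∈ s) :
    partsGe s (v + 1) + 1 = partsGe s v := by
  unfold partsGe
  rw [← card_insert_of_notMem (s := {x ∈ s | v + 1 ≤ x}) (a := v) (by simp)]
  congr 1
  ext x
  simp only [mem_insert, mem_filter]
  constructor
  · rintro (rfl | ⟨hx, hvx⟩)
    exacts [⟨hv, le_rfl⟩, ⟨hx, by omega⟩]
  · rintro ⟨hx, hvx⟩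
    rcases hvx.eq_or_lt with rfl | hlt
    exacts [Or.inl rfl, Or.inr ⟨hx, hlt⟩]

lemma nthPart_antitone (s : Finset ℕ) : Antitone (nthPart s) := by
  have key : ∀ i j, 1 ≤ i → i ≤ j → nthPart s j ≤ nthPart s i := fun i j hi hij => by
    rcases Nat.eq_zero_or_pos (nthPart s j) with h | h
    · omega
    · exact (le_nthPart_iff s hi h).2 (hij.trans ((le_nthPart_iff s (hi.trans hij) h).1 le_rfl))
  intro i j hij
  rcases Nat.eq_zero_or_pos i with rfl | hi
  · rcases Nat.eq_zero_or_pos j with rfl | hj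
    · exact le_rfl
    · rw [nthPart_zero]; exact key 1 j le_rfl hj
  · exact key i j hi hij

lemma nthPart_lt_of_lt (s : Finset ℕ) {i j : ℕ} (hi : 1 ≤ i) (hij : i < j)
    (hj : 0 < nthPart s j) : nthPart s j < nthPart s i := by
  set v := nthPart s j
  have hjv : j ≤ partsGe s v := (le_nthPart_iff s (by omega) hj).1 le_rfl
  have hsucc : partsGe s v ≤ partsGe s (v + 1) + 1 := by
    by_cases hv : v ∈ s
    · rw [partsGe_succ_of_mem hv]
    · rw [partsGe_succ_of_notMem hv]; omega
  exact (le_nthPart_iff s hi (v := v + 1) (by omega)).2 (by omega)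

lemma nthPart_mem (s : Finset ℕ) {i : ℕ} (h : 0 < nthPart s i) : nthPart s i ∈ s := by
  unfold nthPart at h ⊢
  by_cases hi : i - 1 < (s.sort (· ≤ ·)).reverse.length
  · rw [List.getD_eq_getElem _ _ hi, ← mem_sort (· ≤ ·), ← List.mem_reverse]
    exact List.getElem_mem hi
  · rw [List.getD_eq_default _ _ (not_lt.1 hi)] at h
    omega

lemma nthPart_eq_zero_of_card_lt (s : Finset ℕ) {i : ℕ} (h : s.card < i) : nthPart s i = 0 := by
  unfold nthPart
  rw [List.getD_eq_default _ _ (by rw [List.length_reverse, length_sort]; omega)]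

lemma nthPart_pos {s : Finset ℕ} (hs : IsStrictPartition s) {i : ℕ} (hi : 1 ≤ i)
    (h : i ≤ s.card) : 0 < nthPart s i := by
  have hlt : i - 1 < (s.sort (· ≤ ·)).reverse.length := by
    rw [List.length_reverse, length_sort]; omega
  unfold nthPart
  rw [List.getD_eq_getElem _ _ hlt]
  exact hs _ ((mem_sort (· ≤ ·)).1 (List.mem_reverse.1 (List.getElem_mem hlt)))

lemma nthPart_partsGe {s : Finset ℕ} {v : ℕ} (hv : v ∈ s) (hv1 : 1 ≤ v) :
    nthPart s (partsGe s v) = v := by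
  have hge := (le_nthPart_iff s (one_le_partsGe hv) hv1).2 le_rfl
  have hlt : ¬ v + 1 ≤ nthPart s (partsGe s v) := by
    rw [le_nthPart_iff s (one_le_partsGe hv) (by omega), ← partsGe_succ_of_mem hv]
    omega
  omega

lemma partsGe_lt_of_mem {s : Finset ℕ} {p v : ℕ} (hp : p ∈ s) (hpv : p < v) :
    partsGe s v < partsGe s p := by
  have := partsGe_antitone s (show p + 1 ≤ v by omega)
  have := partsGe_succ_of_mem hp
  omega

lemma notMem_of_nthPart_succ_lt {s : Finset ℕ} {m v : ℕ} (hlo : nthPart s (m + 1) < v)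
    (hhi : v < nthPart s m) : v ∉ s := by
  intro hv
  have hrow := nthPart_partsGe hv (by omega)
  rcases le_or_gt (partsGe s v) m with h | h
  · have := nthPart_antitone s h; omega
  · have := nthPart_antitone s (show m + 1 ≤ partsGe s v by omega); omega

lemma partsGe_erase {s : Finset ℕ} {p : ℕ} (hp : p ∈ s) (v : ℕ) :
    partsGe (s.erase p) v = if v ≤ p then partsGe s v - 1 else partsGe s v := by
  unfold partsGe
  rw [filter_erase]
  split_ifs with hv
  · rw [card_erase_of_mem (mem_filter.2 ⟨hp, hv⟩)]
  · rw [erase_eq_of_notMem fun h => hv (mem_filter.1 h).2]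

lemma partsGe_insert {s : Finset ℕ} {q : ℕ} (hq : q ∉ s) (v : ℕ) :
    partsGe (insert q s) v = if v ≤ q then partsGe s v + 1 else partsGe s v := by
  unfold partsGe
  rw [filter_insert]
  split_ifs with hv
  · rw [card_insert_of_notMem fun h => hq (mem_filter.1 h).1]
  · rfl

lemma nthPart_erase_of_lt {s : Finset ℕ} {p j : ℕ} (hp : p ∈ s) (hj : 1 ≤ j)
    (hjp : j < partsGe s p) : nthPart (s.erase p) j = nthPart s j := by
  refine nthPart_eq_of_le_iff fun v hv => ?_
  rw [le_nthPart_iff _ hj hv, le_nthPart_iff _ hj hv, partsGe_erase hp]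
  split_ifs with hvp
  · have := partsGe_antitone s hvp; omega
  · rfl

lemma nthPart_erase_of_ge {s : Finset ℕ} {p j : ℕ} (hp : p ∈ s) (hjp : partsGe s p ≤ j) :
    nthPart (s.erase p) j = nthPart s (j + 1) := by
  have := one_le_partsGe hp
  refine nthPart_eq_of_le_iff fun v hv => ?_
  rw [le_nthPart_iff _ (by omega) hv, le_nthPart_iff _ (by omega) hv, partsGe_erase hp]
  split_ifs with hvp
  · have := partsGe_antitone s hvp; omega
  · have := partsGe_lt_of_mem hp (not_le.1 hvp); omega

lemma nthPart_insert_of_le {s : Finset ℕ} {q j : ℕ} (hq : q ∉ s) (hj : 1 ≤ j)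
    (hjq : j ≤ partsGe s q) : nthPart (insert q s) j = nthPart s j := by
  refine nthPart_eq_of_le_iff fun v hv => ?_
  rw [le_nthPart_iff _ hj hv, le_nthPart_iff _ hj hv, partsGe_insert hq]
  split_ifs with hvq
  · have := partsGe_antitone s hvq; omega
  · rfl

lemma nthPart_insert_partsGe {s : Finset ℕ} {q : ℕ} (hq : q ∉ s) (hq1 : 1 ≤ q) :
    nthPart (insert q s) (partsGe s q + 1) = q := by
  have hrank : partsGe (insert q s) q = partsGe s q + 1 := by
    rw [partsGe_insert hq, if_pos le_rfl]
  rw [← hrank]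
  exact nthPart_partsGe (mem_insert_self q s) hq1

lemma nthPart_insert_of_gt {s : Finset ℕ} {q j : ℕ} (hq : q ∉ s) (hjq : partsGe s q + 1 < j) :
    nthPart (insert q s) j = nthPart s (j - 1) := by
  refine nthPart_eq_of_le_iff fun v hv => ?_
  rw [le_nthPart_iff _ (by omega) hv, le_nthPart_iff _ (by omega) hv, partsGe_insert hq]
  split_ifs with hvq
  · omega
  · have := partsGe_antitone s (show q ≤ v by omega); omega

lemma mem_shiftedDiagram {s : Finset ℕ} {i j : ℕ} :
    (i, j) ∈ shiftedDiagram s ↔ 1 ≤ i ∧ i ≤ j ∧ j + 1 ≤ i + nthPart s i := Iff.rfl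

lemma mem_skewDiag {lam nu : Finset ℕ} {i j : ℕ} :
    (i, j) ∈ skewDiag lam nu ↔ 1 ≤ i ∧ i + nthPart nu i ≤ j ∧ j < i + nthPart lam i := by
  simp only [skewDiag, Set.mem_sdiff, mem_shiftedDiagram]
  omega

lemma shiftedDiagram_subset_iff {lam nu : Finset ℕ} :
    shiftedDiagram nu ⊆ shiftedDiagram lam ↔ ∀ i, 1 ≤ i → nthPart nu i ≤ nthPart lam i := by
  refine ⟨fun h i hi => ?_, fun h ⟨i, j⟩ hc => ?_⟩
  · by_contra! hlt
    have hlast : (i, i + nthPart nu i - 1) ∈ shiftedDiagram nu :=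
      mem_shiftedDiagram.2 ⟨hi, by omega, by omega⟩
    have := mem_shiftedDiagram.1 (h hlast)
    omega
  · have := h i (mem_shiftedDiagram.1 hc).1
    rw [mem_shiftedDiagram] at hc ⊢
    omega

lemma cellAdj_symm {c d : ℕ × ℕ} (h : CellAdj c d) : CellAdj d c := by
  unfold CellAdj at *
  omega

abbrev AdjIn (S : Set (ℕ × ℕ)) (c d : ℕ × ℕ) : Prop := CellAdj c d ∧ c ∈ S ∧ d ∈ S

instance (S : Set (ℕ × ℕ)) : Std.Symm (AdjIn S) :=
  ⟨fun _ _ h => ⟨cellAdj_symm h.1, h.2.2, h.2.1⟩⟩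

lemma reflTransGen_adjIn_row {S : Set (ℕ × ℕ)} {i a b : ℕ} (hab : a ≤ b)
    (hrow : ∀ c, a ≤ c → c ≤ b → (i, c) ∈ S) :
    Relation.ReflTransGen (AdjIn S) (i, b) (i, a) := by
  induction b, hab using Nat.le_induction with
  | base => exact .refl
  | succ n hn ih =>
    refine .head (b := (i, n)) ⟨Or.inl ⟨rfl, Or.inr rfl⟩, hrow _ (by omega) le_rfl,
      hrow n hn (by omega)⟩ ?_
    exact ih fun c hc hcn => hrow c hc (by omega)

/-- `ν` arises from `λ` by deleting the part `λ_{i₀}` and inserting `ν_m`. -/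
structure IsStrip (lam nu : Finset ℕ) (i₀ m : ℕ) : Prop where
  one_le : 1 ≤ i₀
  le : i₀ ≤ m
  nthPart_of_lt : ∀ j, 1 ≤ j → j < i₀ → nthPart nu j = nthPart lam j
  nthPart_of_gt : ∀ j, m < j → nthPart nu j = nthPart lam j
  nthPart_of_mem_Ico : ∀ j, i₀ ≤ j → j < m → nthPart nu j = nthPart lam (j + 1)
  nthPart_last_lt : nthPart nu m < nthPart lam m

namespace IsStrip

variable {lam nu : Finset ℕ} {i₀ m : ℕ} (hS : IsStrip lam nu i₀ m)
include hS

lemma nthPart_lt {j : ℕ} (hj : i₀ ≤ j) (hjm : j ≤ m) : nthPart nu j < nthPart lam j := by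
  rcases hjm.eq_or_lt with rfl | hjm
  · exact hS.nthPart_last_lt
  rw [hS.nthPart_of_mem_Ico j hj hjm]
  rcases Nat.eq_zero_or_pos (nthPart lam (j + 1)) with h | h
  · have := hS.nthPart_last_lt
    have := nthPart_antitone lam hjm.le
    omega
  · exact nthPart_lt_of_lt lam (hS.one_le.trans hj) (Nat.lt_succ_self j) h

lemma nthPart_le {j : ℕ} (hj : 1 ≤ j) : nthPart nu j ≤ nthPart lam j := by
  rcases lt_or_ge j i₀ with h | h
  · exact (hS.nthPart_of_lt j hj h).le
  rcases le_or_gt j m with h' | h'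
  · exact (hS.nthPart_lt h h').le
  · exact (hS.nthPart_of_gt j h').le

lemma subset : shiftedDiagram nu ⊆ shiftedDiagram lam :=
  shiftedDiagram_subset_iff.2 fun _ => hS.nthPart_le

lemma mem_skewDiag_iff {i j : ℕ} : (i, j) ∈ skewDiag lam nu ↔
    i₀ ≤ i ∧ i ≤ m ∧ i + nthPart nu i ≤ j ∧ j < i + nthPart lam i := by
  rw [mem_skewDiag]
  constructor
  · rintro ⟨hi, hlo, hhi⟩
    have hi₀ : i₀ ≤ i := by
      by_contra!
      rw [hS.nthPart_of_lt i hi this] at hlo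
      omega
    have him : i ≤ m := by
      by_contra!
      rw [hS.nthPart_of_gt i this] at hlo
      omega
    exact ⟨hi₀, him, hlo, hhi⟩
  · rintro ⟨hi₀, -, hlo, hhi⟩
    exact ⟨hS.one_le.trans hi₀, hlo, hhi⟩

lemma diagVal_mem_Ioc {c : ℕ × ℕ} (hc : c ∈ skewDiag lam nu) :
    diagVal c ∈ Set.Ioc (nthPart nu c.1) (nthPart lam c.1) := by
  obtain ⟨i, j⟩ := c
  have := hS.mem_skewDiag_iff.1 hc
  simp only [diagVal, Set.mem_Ioc]
  omega

lemma diagVal_lt_of_fst_lt {c d : ℕ × ℕ} (hc : c ∈ skewDiag lam nu) (hd : d ∈ skewDiag lam nu)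
    (hcd : c.1 < d.1) : diagVal d < diagVal c := by
  obtain ⟨i, j⟩ := c
  obtain ⟨i', j'⟩ := d
  have hc' := hS.diagVal_mem_Ioc hc
  have hd' := hS.diagVal_mem_Ioc hd
  have hrow := hS.nthPart_of_mem_Ico i (hS.mem_skewDiag_iff.1 hc).1
    (hcd.trans_le (hS.mem_skewDiag_iff.1 hd).2.1)
  have := nthPart_antitone lam (show i + 1 ≤ i' from hcd)
  simp only [Set.mem_Ioc] at hc' hd'
  omega

lemma injOn : Set.InjOn diagVal (skewDiag lam nu) := by
  rintro ⟨i, j⟩ hc ⟨i', j'⟩ hd heq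
  rcases lt_trichotomy i i' with h | rfl | h
  · exact absurd heq (hS.diagVal_lt_of_fst_lt hc hd h).ne'
  · have := (hS.mem_skewDiag_iff.1 hc).2.2.1
    simp only [diagVal] at heq
    rw [show j = j' by omega]
  · exact absurd heq (hS.diagVal_lt_of_fst_lt hd hc h).ne

lemma bijOn :
    Set.BijOn diagVal (skewDiag lam nu) (Set.Ioc (nthPart nu m) (nthPart lam i₀)) := by
  refine ⟨fun c hc => ?_, hS.injOn, fun d hd => ?_⟩
  · have hrow := hS.mem_skewDiag_iff.1 (show (c.1, c.2) ∈ _ from hc)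
    have hdiag := hS.diagVal_mem_Ioc hc
    have := nthPart_antitone lam hrow.1
    have := nthPart_antitone nu hrow.2.1
    simp only [Set.mem_Ioc] at hdiag ⊢
    omega
  · set i := Nat.findGreatest (fun i => d ≤ nthPart lam i) m
    have hi₀ : i₀ ≤ i := Nat.le_findGreatest hS.le hd.2
    have hdi : d ≤ nthPart lam i :=
      Nat.findGreatest_spec (P := fun i => d ≤ nthPart lam i) hS.le hd.2
    have him : i ≤ m := Nat.findGreatest_le m
    have hνi : nthPart nu i < d := by
      rcases him.eq_or_lt with h | h
      · rw [h]; exact hd.1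
      · rw [hS.nthPart_of_mem_Ico i hi₀ h]
        exact not_le.1 (Nat.findGreatest_is_greatest (P := fun i => d ≤ nthPart lam i)
          (Nat.lt_succ_self i) h)
    refine ⟨(i, i + d - 1), hS.mem_skewDiag_iff.2 ⟨hi₀, him, by omega, by omega⟩, ?_⟩
    simp only [diagVal]
    omega

lemma ncard : (skewDiag lam nu).ncard = nthPart lam i₀ - nthPart nu m := by
  rw [← hS.injOn.ncard_image, hS.bijOn.image_eq, Set.ncard_Ioc_nat]

lemma finite : (skewDiag lam nu).Finite :=
  (hS.bijOn.image_eq ▸ Set.finite_Ioc _ _).of_finite_image hS.injOn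

lemma nonempty : (skewDiag lam nu).Nonempty :=
  ⟨(m, m + nthPart nu m), hS.mem_skewDiag_iff.2 ⟨hS.le, le_rfl, le_rfl, by
    have := hS.nthPart_last_lt; omega⟩⟩

lemma isTail (h : nthPart nu m = 0) : IsTail (skewDiag lam nu) (m, m) := by
  refine ⟨hS.mem_skewDiag_iff.2 ⟨hS.le, le_rfl, by omega, by have := hS.nthPart_last_lt; omega⟩,
    fun d hd => ?_⟩
  have := (hS.diagVal_mem_Ioc hd).1
  simp only [diagVal] at this ⊢
  omega

lemma edgeConnected : EdgeConnected (skewDiag lam nu) := by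
  set E := skewDiag lam nu
  have toCorner : ∀ i, i₀ ≤ i → ∀ j, (i, j) ∈ E →
      Relation.ReflTransGen (AdjIn E) (i, j) (i₀, i₀ + nthPart nu i₀) := by
    intro i hi
    induction i, hi using Nat.le_induction with
    | base =>
      intro j hj
      have hrow := hS.mem_skewDiag_iff.1 hj
      exact reflTransGen_adjIn_row hrow.2.2.1 fun c hc hcj =>
        hS.mem_skewDiag_iff.2 ⟨le_rfl, hrow.2.1, hc, by omega⟩
    | succ n hn ih =>
      intro j hj
      obtain ⟨-, hnm, hlo, hhi⟩ := hS.mem_skewDiag_iff.1 hj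
      have hνn := hS.nthPart_of_mem_Ico n hn (by omega)
      have hlt := hS.nthPart_lt hn (by omega)
      -- leave row `n + 1` through its last cell, which lies just below a cell of row `n`
      set r := n + nthPart lam (n + 1)
      have hup : (n, r) ∈ E := hS.mem_skewDiag_iff.2 ⟨hn, by omega, by omega, by omega⟩
      have hlast : (n + 1, r) ∈ E := hS.mem_skewDiag_iff.2 ⟨by omega, hnm, by omega, by omega⟩
      have hright : Relation.ReflTransGen (AdjIn E) (n + 1, r) (n + 1, j) :=
        reflTransGen_adjIn_row (by omega) fun c hc hcr =>
          hS.mem_skewDiag_iff.2 ⟨by omega, hnm, by omega, by omega⟩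
      exact (symm_of _ hright).trans
        (.head (b := (n, r)) ⟨Or.inr ⟨rfl, Or.inr rfl⟩, hlast, hup⟩ (ih r hup))
  rintro ⟨i, j⟩ hc ⟨i', j'⟩ hd
  exact (toCorner i (hS.mem_skewDiag_iff.1 hc).1 j hc).trans
    (symm_of _ (toCorner i' (hS.mem_skewDiag_iff.1 hd).1 j' hd))

lemma nthPart_first_pos : 0 < nthPart lam i₀ :=
  (Nat.zero_le _).trans_lt (hS.nthPart_lt le_rfl hS.le)

lemma nthPart_first_mem : nthPart lam i₀ ∈ lam :=
  nthPart_mem lam hS.nthPart_first_pos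

lemma mem_erase_of_mem {x : ℕ} (hx : x ∈ nu) (hx0 : 0 < x) (hxm : x ≠ nthPart nu m) :
    x ∈ lam.erase (nthPart lam i₀) := by
  obtain ⟨t, ht, ht1⟩ : ∃ t, nthPart nu t = x ∧ 1 ≤ t :=
    ⟨_, nthPart_partsGe hx hx0, one_le_partsGe hx⟩
  have hpos := hS.nthPart_first_pos
  rcases lt_or_ge t i₀ with hti | hti
  · rw [hS.nthPart_of_lt t ht1 hti] at ht
    subst ht
    exact Finset.mem_erase.2 ⟨(nthPart_lt_of_lt lam ht1 hti hpos).ne', nthPart_mem lam hx0⟩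
  · have hne : x ≠ nthPart lam i₀ := by
      have := nthPart_antitone nu hti
      have := hS.nthPart_lt le_rfl hS.le
      omega
    refine Finset.mem_erase.2 ⟨hne, ?_⟩
    rcases lt_trichotomy t m with htm | rfl | htm
    · rw [hS.nthPart_of_mem_Ico t hti htm] at ht
      exact ht ▸ nthPart_mem lam (ht ▸ hx0)
    · exact absurd ht.symm hxm
    · rw [hS.nthPart_of_gt t htm] at ht
      exact ht ▸ nthPart_mem lam (ht ▸ hx0)

lemma nthPart_last_eq_zero {a : ℕ} (ha : (a, a) ∈ skewDiag lam nu) : nthPart nu m = 0 := by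
  have := hS.mem_skewDiag_iff.1 ha
  have := nthPart_antitone nu this.2.1
  omega

lemma ncard_eq_and_subset_erase (hnu : IsStrictPartition nu) {a : ℕ}
    (ha : (a, a) ∈ skewDiag lam nu) :
    (skewDiag lam nu).ncard = nthPart lam i₀ ∧ nu ⊆ lam.erase (nthPart lam i₀) := by
  have h0 := hS.nthPart_last_eq_zero ha
  refine ⟨by rw [hS.ncard, h0, Nat.sub_zero], fun x hx => ?_⟩
  exact hS.mem_erase_of_mem hx (hnu x hx) (h0 ▸ (hnu x hx).ne')

end IsStrip

lemma exists_vertical_step_of_reflTransGen {S : Set (ℕ × ℕ)} {c d : ℕ × ℕ}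
    (h : Relation.ReflTransGen (AdjIn S) c d) {j : ℕ} (hc : c.1 ≤ j) (hd : j < d.1) :
    ∃ x ∈ S, x.1 = j ∧ (j + 1, x.2) ∈ S := by
  induction h with
  | refl => omega
  | @tail y z _ hyz ih =>
    by_cases hy : j < y.1
    · exact ih hy
    obtain ⟨hadj, hyS, hzS⟩ := hyz
    rcases hadj with ⟨hrow, -⟩ | ⟨hcol, hstep⟩
    · omega
    · have hz : z = (j + 1, y.2) := Prod.ext (by simp only; omega) hcol.symm
      exact ⟨y, hyS, by omega, hz ▸ hzS⟩

lemma nthPart_le_of_injOn {lam nu : Finset ℕ} (hinj : Set.InjOn diagVal (skewDiag lam nu))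
    {j : ℕ} (hj : 1 ≤ j) (hrow : nthPart nu (j + 1) < nthPart lam (j + 1)) :
    nthPart lam (j + 1) ≤ nthPart nu j := by
  by_contra! hlt
  have := nthPart_antitone lam (show j ≤ j + 1 by omega)
  -- otherwise the last cells of rows `j + 1` and `j` would share a diagonal
  have hlow : (j + 1, j + nthPart lam (j + 1)) ∈ skewDiag lam nu :=
    mem_skewDiag.2 ⟨by omega, by omega, by omega⟩
  have hhigh : (j, j + nthPart lam (j + 1) - 1) ∈ skewDiag lam nu :=
    mem_skewDiag.2 ⟨hj, by omega, by omega⟩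
  have := hinj hlow hhigh (by simp only [diagVal]; omega)
  simp only [Prod.mk.injEq] at this
  omega

lemma exists_isStrip {lam nu : Finset ℕ} (hsub : shiftedDiagram nu ⊆ shiftedDiagram lam)
    (hne : (skewDiag lam nu).Nonempty) (hconn : EdgeConnected (skewDiag lam nu))
    (hinj : Set.InjOn diagVal (skewDiag lam nu)) : ∃ i₀ m, IsStrip lam nu i₀ m := by
  have hle := shiftedDiagram_subset_iff.1 hsub
  set rows := {j ∈ Finset.Icc 1 lam.card | nthPart nu j < nthPart lam j}
  have mem_rows : ∀ {j}, j ∈ rows ↔ 1 ≤ j ∧ nthPart nu j < nthPart lam j := fun {j} => by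
    simp only [rows, Finset.mem_filter, Finset.mem_Icc]
    have := nthPart_eq_zero_of_card_lt lam (i := j)
    omega
  have first_cell : ∀ {j}, j ∈ rows → (j, j + nthPart nu j) ∈ skewDiag lam nu := fun hj =>
    mem_skewDiag.2 ⟨(mem_rows.1 hj).1, le_rfl, by have := mem_rows.1 hj; omega⟩
  have hrows : rows.Nonempty := by
    obtain ⟨⟨i, j⟩, hc⟩ := hne
    have := mem_skewDiag.1 hc
    exact ⟨i, mem_rows.2 ⟨this.1, by omega⟩⟩
  have hi₀ := rows.min'_mem hrows
  have hm := rows.max'_mem hrows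
  have outside : ∀ j, 1 ≤ j → j ∉ rows → nthPart nu j = nthPart lam j := fun j hj hjr =>
    le_antisymm (hle j hj) (not_lt.1 fun h => hjr (mem_rows.2 ⟨hj, h⟩))
  refine ⟨rows.min' hrows, rows.max' hrows, (mem_rows.1 hi₀).1, rows.min'_le_max' hrows,
    fun j hj hlt => outside j hj fun hjr => (rows.min'_le j hjr).not_gt hlt,
    fun j hgt => outside j (by have := (mem_rows.1 hm).1; omega)
      fun hjr => (rows.le_max' j hjr).not_gt hgt,
    fun j hj hjm => ?_, (mem_rows.1 hm).2⟩
  obtain ⟨x, hx, hxj, hbelow⟩ := exists_vertical_step_of_reflTransGen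
    (hconn _ (first_cell hi₀) _ (first_cell hm)) hj hjm
  obtain ⟨x1, x2⟩ := x
  simp only at hxj
  subst hxj
  have hupper := mem_skewDiag.1 hx
  have hlower := mem_skewDiag.1 hbelow
  have := nthPart_le_of_injOn hinj hupper.1 (by omega)
  omega

lemma IsRemovableSingleRibbon.mem_or_sub_notMem {lam nu : Finset ℕ} {k : ℕ} (hk : 1 ≤ k)
    (h : IsRemovableSingleRibbon lam nu k) : k ∈ lam ∨ ∃ p ∈ lam, k < p ∧ p - k ∉ lam := by
  obtain ⟨-, -, hsub, hcard, hconn, hinj⟩ := h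
  have hne : (skewDiag lam nu).Nonempty := Set.nonempty_of_ncard_ne_zero (by omega)
  obtain ⟨i₀, m, hS⟩ := exists_isStrip hsub hne hconn hinj
  rw [hS.ncard] at hcard
  rcases Nat.eq_zero_or_pos (nthPart nu m) with h0 | h0
  · left
    rw [← hcard, h0, Nat.sub_zero]
    exact hS.nthPart_first_mem
  · right
    refine ⟨nthPart lam i₀, hS.nthPart_first_mem, by omega, ?_⟩
    rw [show nthPart lam i₀ - k = nthPart nu m by omega]
    -- `ν_m` lies strictly between the consecutive parts `λ_{m+1} = ν_{m+1}` and `λ_m`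
    have hbelow : nthPart lam (m + 1) < nthPart nu m := by
      rw [← hS.nthPart_of_gt (m + 1) (by omega)]
      rcases Nat.eq_zero_or_pos (nthPart nu (m + 1)) with h1 | h1
      · omega
      · exact nthPart_lt_of_lt nu (hS.one_le.trans hS.le) (by omega) h1
    exact notMem_of_nthPart_succ_lt hbelow hS.nthPart_last_lt

lemma IsRemovableDoubleRibbon.exists_parts {lam nu : Finset ℕ} {k : ℕ}
    (h : IsRemovableDoubleRibbon lam nu k) : ∃ a ∈ lam, ∃ b ∈ lam, a ≠ b ∧ a + b = k := by
  obtain ⟨hcard, R, S, -, hnu, hsub, hdisj, hunion, hRne, hRconn, hRinj, hSne, hSconn, hSinj,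
    -, ⟨a, haR⟩, ⟨b, hbS⟩, mu, hmu, hmuR⟩ := h
  have hRlam : R ⊆ shiftedDiagram lam := fun x hx =>
    (hunion.symm ▸ Set.mem_union_left S hx : x ∈ skewDiag lam nu).1
  have hR : skewDiag lam mu = R := by
    rw [skewDiag, hmuR, Set.sdiff_sdiff_cancel_left hRlam]
  have hS : skewDiag mu nu = S := by
    ext x
    have := congrArg (x ∈ ·) hunion
    simp only [skewDiag, hmuR, Set.mem_sdiff, Set.mem_union, eq_iff_iff] at this ⊢
    have := @Set.disjoint_left.1 hdisj x
    tauto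
  have hnu_mu : shiftedDiagram nu ⊆ shiftedDiagram mu := fun x hx => by
    rw [hmuR]
    refine ⟨hsub hx, fun hxR => ?_⟩
    exact (hunion.symm ▸ Set.mem_union_left S hxR : x ∈ skewDiag lam nu).2 hx
  have hmu_lam : shiftedDiagram mu ⊆ shiftedDiagram lam := hmuR ▸ Set.sdiff_subset
  obtain ⟨i₀, m, hSR⟩ := exists_isStrip hmu_lam (hR ▸ hRne) (hR ▸ hRconn) (hR ▸ hRinj)
  obtain ⟨i₁, m₁, hSS⟩ := exists_isStrip hnu_mu (hS ▸ hSne) (hS ▸ hSconn) (hS ▸ hSinj)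
  obtain ⟨hRcard, hmu_sub⟩ := hSR.ncard_eq_and_subset_erase hmu (hR ▸ haR.1)
  obtain ⟨hScard, -⟩ := hSS.ncard_eq_and_subset_erase hnu (hS ▸ hbS.1)
  obtain ⟨hba, hb⟩ := Finset.mem_erase.1 (hmu_sub hSS.nthPart_first_mem)
  refine ⟨_, hSR.nthPart_first_mem, _, hb, hba.symm, ?_⟩
  rw [← hcard, ← hunion, Set.ncard_union_eq hdisj (hR ▸ hSR.finite) (hS ▸ hSS.finite), ← hR,
    ← hS, hRcard, hScard]

lemma isStrictPartition_erase {s : Finset ℕ} (hs : IsStrictPartition s) (p : ℕ) :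
    IsStrictPartition (s.erase p) :=
  fun x hx => hs x (Finset.mem_of_mem_erase hx)

lemma IsStrip.isRemovableSingleRibbon {lam nu : Finset ℕ} {i₀ m : ℕ} (hS : IsStrip lam nu i₀ m)
    (hlam : IsStrictPartition lam) (hnu : IsStrictPartition nu) :
    IsRemovableSingleRibbon lam nu (nthPart lam i₀ - nthPart nu m) :=
  ⟨hlam, hnu, hS.subset, hS.ncard, hS.edgeConnected, hS.injOn⟩

lemma nthPart_erase_card {s : Finset ℕ} {p : ℕ} (hp : p ∈ s) :
    nthPart (s.erase p) s.card = 0 :=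
  nthPart_eq_zero_of_card_lt _ <| by
    rw [Finset.card_erase_of_mem hp]
    exact Nat.sub_lt (Finset.card_pos.2 ⟨p, hp⟩) one_pos

lemma isStrip_erase {s : Finset ℕ} (hs : IsStrictPartition s) {p : ℕ} (hp : p ∈ s) :
    IsStrip s (s.erase p) (partsGe s p) s.card := by
  refine ⟨one_le_partsGe hp, partsGe_le_card s p, fun j hj hjp => nthPart_erase_of_lt hp hj hjp,
    fun j hj => ?_, fun j hj _ => nthPart_erase_of_ge hp hj, ?_⟩
  · rw [nthPart_eq_zero_of_card_lt s hj, nthPart_eq_zero_of_card_lt _ (by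
      rw [Finset.card_erase_of_mem hp]; omega)]
  · rw [nthPart_erase_card hp]
    exact nthPart_pos hs (one_le_partsGe hp |>.trans (partsGe_le_card s p)) le_rfl

lemma partsGe_erase_add_one {s : Finset ℕ} {p q : ℕ} (hp : p ∈ s) (hqp : q ≤ p) :
    partsGe (s.erase p) q + 1 = partsGe s q := by
  rw [partsGe_erase hp, if_pos hqp]
  have := partsGe_antitone s hqp
  have := one_le_partsGe hp
  omega

lemma isStrip_replace {s : Finset ℕ} {p q : ℕ} (hp : p ∈ s) (hq : q ∉ s) (hq1 : 1 ≤ q)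
    (hqp : q < p) : IsStrip s (insert q (s.erase p)) (partsGe s p) (partsGe s q) := by
  have hq' : q ∉ s.erase p := fun h => hq (Finset.mem_of_mem_erase h)
  have hrank := partsGe_erase_add_one hp hqp.le
  have hpq := partsGe_antitone s hqp.le
  have hp1 := one_le_partsGe hp
  refine ⟨hp1, hpq, fun j hj hjp => ?_, fun j hj => ?_, fun j hj hjq => ?_, ?_⟩
  · rw [nthPart_insert_of_le hq' hj (by omega), nthPart_erase_of_lt hp hj hjp]
  · rw [nthPart_insert_of_gt hq' (by omega), nthPart_erase_of_ge hp (by omega)]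
    congr 1
    omega
  · rw [nthPart_insert_of_le hq' (by omega) (by omega), nthPart_erase_of_ge hp hj]
  · rw [← hrank, nthPart_insert_partsGe hq' hq1, hrank]
    refine (le_nthPart_iff s (by omega) (v := q + 1) (by omega)).2 ?_
    rw [partsGe_succ_of_notMem hq]

lemma isRemovableSingleRibbon_erase {lam : Finset ℕ} (hlam : IsStrictPartition lam) {p : ℕ}
    (hp : p ∈ lam) : IsRemovableSingleRibbon lam (lam.erase p) p := by
  have h := (isStrip_erase hlam hp).isRemovableSingleRibbon hlam (isStrictPartition_erase hlam p)
  rwa [nthPart_partsGe hp (hlam p hp), nthPart_erase_card hp, Nat.sub_zero] at h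

lemma isRemovableSingleRibbon_replace {lam : Finset ℕ} (hlam : IsStrictPartition lam)
    {p k : ℕ} (hp : p ∈ lam) (hkp : k < p) (hq : p - k ∉ lam) :
    IsRemovableSingleRibbon lam (insert (p - k) (lam.erase p)) k := by
  have hk : 0 < k := Nat.pos_of_ne_zero fun h => hq (by rwa [h, Nat.sub_zero])
  have hS := isStrip_replace hp hq (by omega) (by omega)
  have hnu : IsStrictPartition (insert (p - k) (lam.erase p)) := by
    intro x hx
    rcases Finset.mem_insert.1 hx with hx | hx
    · omega
    · exact isStrictPartition_erase hlam p x hx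
  have h := hS.isRemovableSingleRibbon hlam hnu
  have hq' : p - k ∉ lam.erase p := fun h => hq (Finset.mem_of_mem_erase h)
  rwa [nthPart_partsGe hp (hlam p hp), ← partsGe_erase_add_one hp (Nat.sub_le p k),
    nthPart_insert_partsGe hq' (by omega),
    show p - (p - k) = k by omega] at h

lemma isRemovableDoubleRibbon_erase_erase {lam : Finset ℕ} (hlam : IsStrictPartition lam)
    {a b : ℕ} (ha : a ∈ lam) (hb : b ∈ lam) (hba : b < a) :
    IsRemovableDoubleRibbon lam ((lam.erase a).erase b) (a + b) := by
  set mu := lam.erase a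
  have hbmu : b ∈ mu := Finset.mem_erase.2 ⟨hba.ne, hb⟩
  have hmu := isStrictPartition_erase hlam a
  have hR := isStrip_erase hlam ha
  have hS := isStrip_erase hmu hbmu
  have hRcard : (skewDiag lam mu).ncard = a := by
    rw [hR.ncard, nthPart_partsGe ha (hlam a ha), nthPart_erase_card ha, Nat.sub_zero]
  have hScard : (skewDiag mu (mu.erase b)).ncard = b := by
    rw [hS.ncard, nthPart_partsGe hbmu (hlam b hb), nthPart_erase_card hbmu, Nat.sub_zero]
  have hdisj : Disjoint (skewDiag lam mu) (skewDiag mu (mu.erase b)) :=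
    Set.disjoint_left.2 fun _ hR hS => hR.2 hS.1
  have hunion : skewDiag lam mu ∪ skewDiag mu (mu.erase b) = skewDiag lam (mu.erase b) :=
    Set.sdiff_union_sdiff_cancel hR.subset hS.subset
  refine ⟨?_, _, _, hlam, isStrictPartition_erase hmu b, hS.subset.trans hR.subset, hdisj, hunion,
    hR.nonempty, hR.edgeConnected, hR.injOn, hS.nonempty, hS.edgeConnected, hS.injOn,
    by omega, ⟨_, hR.isTail (nthPart_erase_card ha)⟩, ⟨_, hS.isTail (nthPart_erase_card hbmu)⟩,
    mu, hmu, (Set.sdiff_sdiff_cancel_left hR.subset).symm⟩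
  rw [← hunion, Set.ncard_union_eq hdisj hR.finite hS.finite, hRcard, hScard]

end ShiftedCore

open ShiftedCore in
/-- A strict partition `λ` admits no removable `k`-ribbon (is a shifted
`k`-core) iff: `k` is not a part; for every part `p > k`, `p - k` is also a part; and no
two distinct parts sum to `k`. -/
theorem stmt4 (k : ℕ) (hk : 1 ≤ k) (lam : Finset ℕ) (hlam : IsStrictPartition lam) :
    (¬∃ nu : Finset ℕ, IsRemovableRibbon lam nu k) ↔
      (k ∉ lam ∧ (∀ p ∈ lam, k < p → p - k ∈ lam) ∧
        ∀ a ∈ lam, ∀ b ∈ lam, a ≠ b → a + b ≠ k) := by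
  constructor
  · intro hcore
    refine ⟨fun hk_mem => hcore ⟨_, .inl (isRemovableSingleRibbon_erase hlam hk_mem)⟩,
      fun p hp hkp => by_contra fun hq =>
        hcore ⟨_, .inl (isRemovableSingleRibbon_replace hlam hp hkp hq)⟩,
      fun a ha b hb hab hsum => ?_⟩
    rcases hab.lt_or_gt with hab | hab
    · rw [add_comm] at hsum
      exact hcore ⟨_, .inr (hsum ▸ isRemovableDoubleRibbon_erase_erase hlam hb ha hab)⟩
    · exact hcore ⟨_, .inr (hsum ▸ isRemovableDoubleRibbon_erase_erase hlam ha hb hab)⟩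
  · rintro ⟨hk_notMem, hsub_mem, hno_sum⟩ ⟨nu, hsingle | hdouble⟩
    · rcases hsingle.mem_or_sub_notMem hk with hk_mem | ⟨p, hp, hkp, hq⟩
      exacts [hk_notMem hk_mem, hq (hsub_mem p hp hkp)]
    · obtain ⟨a, ha, b, hb, hab, hsum⟩ := hdouble.exists_parts
      exact hno_sum a ha b hb hab hsum
end

section
/- Fix k ≥ 1 and consider the following move relation on strict partitions (identified with their finite sets of parts): μ → ν if ν is obtained from μ by (I) replacing a part p > k by p − k, provided p − k is not a part of μ, or (Ia) deleting a part equal to k, or (II) deleting two distinct parts a and b with a + b = k. Then every maximal sequence of moves starting from a given strict partition λ terminates, and all such maximal sequences terminate at the same strict partition; i.e., the k-core of λ is unique. -/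
/-- A strict partition as a finite set of distinct positive integers. -/
def IsStrictPartitionM (s : Finset ℕ) : Prop := ∀ x ∈ s, 0 < x

/-- The `k`-abacus moves: (I) replace a part `p > k` by `p - k` when `p - k` is not a part;
(Ia) delete a part equal to `k`; (II) delete two distinct parts summing to `k`. -/
def AbacusMove (k : ℕ) (mu nu : Finset ℕ) : Prop :=
  (∃ p ∈ mu, k < p ∧ p - k ∉ mu ∧ nu = insert (p - k) (mu.erase p)) ∨
  (k ∈ mu ∧ nu = mu.erase k) ∨
  (∃ a ∈ mu, ∃ b ∈ mu, a ≠ b ∧ a + b = k ∧ nu = (mu.erase a).erase b)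

/-- number of parts with residue `r` mod `k` -/
def cntM (k : ℕ) (mu : Finset ℕ) (r : ℕ) : ℕ := (mu.filter (fun x => x % k = r)).card

/-- the invariant -/
def JM (k : ℕ) (mu : Finset ℕ) (r : ℕ) : ℤ :=
  if 2 * r = k then (cntM k mu r : ℤ) else (cntM k mu r : ℤ) - (cntM k mu (k - r) : ℤ)

lemma move_sum_lt {k : ℕ} (hk : 1 ≤ k) {mu nu : Finset ℕ} (h : AbacusMove k mu nu) :
    nu.sum id < mu.sum id := by
  rcases h with ⟨p, hp, hkp, hnp, rfl⟩ | ⟨hmem, rfl⟩ | ⟨a, ha, b, hb, hne, hab, rfl⟩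
  · have h1 : (mu.erase p).sum id + id p = mu.sum id := Finset.sum_erase_add mu id hp
    have h2 : (insert (p - k) (mu.erase p)).sum id = id (p - k) + (mu.erase p).sum id :=
      Finset.sum_insert (fun hc => hnp (Finset.mem_of_mem_erase hc))
    simp only [id] at *
    omega
  · have h1 : (mu.erase k).sum id + id k = mu.sum id := Finset.sum_erase_add mu id hmem
    simp only [id] at *
    omega
  · have hb' : b ∈ mu.erase a := Finset.mem_erase.mpr ⟨fun h => hne h.symm, hb⟩
    have h1 : (mu.erase a).sum id + id a = mu.sum id := Finset.sum_erase_add mu id ha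
    have h2 : ((mu.erase a).erase b).sum id + id b = (mu.erase a).sum id :=
      Finset.sum_erase_add _ id hb'
    simp only [id] at *
    omega

lemma move_pos {k : ℕ} {mu nu : Finset ℕ} (hpos : ∀ x ∈ mu, 0 < x)
    (h : AbacusMove k mu nu) : ∀ x ∈ nu, 0 < x := by
  rcases h with ⟨p, hp, hkp, hnp, rfl⟩ | ⟨hmem, rfl⟩ | ⟨a, ha, b, hb, hne, hab, rfl⟩
  · intro x hx
    rcases Finset.mem_insert.mp hx with rfl | hx
    · omega
    · exact hpos x (Finset.mem_of_mem_erase hx)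
  · exact fun x hx => hpos x (Finset.mem_of_mem_erase hx)
  · exact fun x hx => hpos x (Finset.mem_of_mem_erase (Finset.mem_of_mem_erase hx))

lemma cnt_erase {k a : ℕ} {mu : Finset ℕ} (ha : a ∈ mu) (s : ℕ) :
    cntM k (mu.erase a) s = if a % k = s then cntM k mu s - 1 else cntM k mu s := by
  unfold cntM
  rw [Finset.filter_erase]
  by_cases h : a % k = s
  · have hmem : a ∈ mu.filter (fun x => x % k = s) := Finset.mem_filter.mpr ⟨ha, h⟩
    rw [if_pos h, Finset.card_erase_of_mem hmem]
  · have hnm : a ∉ mu.filter (fun x => x % k = s) := fun hc => h (Finset.mem_filter.mp hc).2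
    rw [if_neg h, Finset.erase_eq_of_notMem hnm]

lemma cnt_moveI {k p : ℕ} {mu : Finset ℕ} (hp : p ∈ mu) (hkp : k < p) (hnp : p - k ∉ mu)
    (s : ℕ) : cntM k (insert (p - k) (mu.erase p)) s = cntM k mu s := by
  have hmod : (p - k) % k = p % k := by
    conv_rhs => rw [← Nat.sub_add_cancel hkp.le]
    rw [Nat.add_mod_right]
  unfold cntM
  rw [Finset.filter_insert, Finset.filter_erase]
  by_cases hs : p % k = s
  · rw [if_pos (by rw [hmod]; exact hs)]
    have hpf : p ∈ mu.filter (fun x => x % k = s) := Finset.mem_filter.mpr ⟨hp, hs⟩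
    have hc1 : 1 ≤ (mu.filter (fun x => x % k = s)).card := Finset.card_pos.mpr ⟨p, hpf⟩
    rw [Finset.card_insert_of_notMem
        (fun hc => hnp (Finset.mem_filter.mp (Finset.mem_of_mem_erase hc)).1),
      Finset.card_erase_of_mem hpf]
    omega
  · have hnm : p ∉ mu.filter (fun x => x % k = s) := fun hc => hs (Finset.mem_filter.mp hc).2
    rw [if_neg (by rw [hmod]; exact hs), Finset.erase_eq_of_notMem hnm]

lemma J_invariant {k : ℕ} (hk : 1 ≤ k) {mu nu : Finset ℕ}
    (hpos : ∀ x ∈ mu, 0 < x) (h : AbacusMove k mu nu) :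
    ∀ r, 0 < r → r < k → JM k nu r = JM k mu r := by
  intro r hr0 hrk
  rcases h with ⟨p, hp, hkp, hnp, rfl⟩ | ⟨hmem, rfl⟩ | ⟨a, ha, b, hb, hne, hab, rfl⟩
  · unfold JM
    rw [cnt_moveI hp hkp hnp, cnt_moveI hp hkp hnp]
  · have e : ∀ s, s ≠ 0 → cntM k (mu.erase k) s = cntM k mu s := by
      intro s hs
      rw [cnt_erase hmem, Nat.mod_self, if_neg (fun h => hs h.symm)]
    unfold JM
    rw [e r (by omega), e (k - r) (by omega)]
  · have ha0 : 0 < a := hpos a ha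
    have hb0 : 0 < b := hpos b hb
    have hma : a % k = a := Nat.mod_eq_of_lt (by omega)
    have hmb : b % k = b := Nat.mod_eq_of_lt (by omega)
    have hb' : b ∈ mu.erase a := Finset.mem_erase.mpr ⟨fun h => hne h.symm, hb⟩
    have hca : 1 ≤ cntM k mu a := by
      unfold cntM
      exact Finset.card_pos.mpr ⟨a, Finset.mem_filter.mpr ⟨ha, hma⟩⟩
    have hcb : 1 ≤ cntM k mu b := by
      unfold cntM
      exact Finset.card_pos.mpr ⟨b, Finset.mem_filter.mpr ⟨hb, hmb⟩⟩
    have key : ∀ s, cntM k ((mu.erase a).erase b) s =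
        if b = s then cntM k (mu.erase a) s - 1 else cntM k (mu.erase a) s := by
      intro s; rw [cnt_erase hb', hmb]
    have key2 : ∀ s, cntM k (mu.erase a) s =
        if a = s then cntM k mu s - 1 else cntM k mu s := by
      intro s; rw [cnt_erase ha, hma]
    have keyc : ∀ s, (cntM k ((mu.erase a).erase b) s : ℤ)
        = (cntM k mu s : ℤ) - (if a = s then 1 else 0) - (if b = s then 1 else 0) := by
      intro s
      rw [key s, key2 s]
      by_cases has : a = s
      · subst has
        rw [if_pos rfl, if_pos rfl, if_neg (fun h => hne h.symm), if_neg (fun h => hne h.symm)]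
        omega
      · by_cases hbs : b = s
        · subst hbs
          rw [if_pos rfl, if_neg has, if_neg has, if_pos rfl]
          omega
        · rw [if_neg hbs, if_neg has, if_neg has, if_neg hbs]
          omega
    unfold JM
    by_cases h2 : 2 * r = k
    · rw [if_pos h2, if_pos h2, keyc r]
      split_ifs <;> omega
    · rw [if_neg h2, if_neg h2, keyc r, keyc (k - r)]
      split_ifs <;> omega

lemma dc_mem_iff {T : Finset ℕ} (h : ∀ i ∈ T, ∀ j, j < i → j ∈ T) (i : ℕ) :
    i ∈ T ↔ i < T.card := by
  constructor
  · intro hi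
    have hsub : Finset.range (i + 1) ⊆ T := by
      intro j hj
      rw [Finset.mem_range] at hj
      rcases Nat.lt_succ_iff_lt_or_eq.mp hj with h' | h'
      · exact h i hi j h'
      · subst h'; exact hi
    have := Finset.card_le_card hsub
    simpa using this
  · intro hi
    by_contra hni
    have hsub : T ⊆ Finset.range i := by
      intro j hj
      rw [Finset.mem_range]
      by_contra hji
      push_neg at hji
      rcases eq_or_lt_of_le hji with h' | h'
      · exact hni (h' ▸ hj)
      · exact hni (h j hj i h')
    exact absurd (Finset.card_le_card hsub) (by simpa using Nat.not_le.mpr hi)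

lemma normal_char {k : ℕ} (hk : 1 ≤ k) {mu : Finset ℕ} (hpos : ∀ x ∈ mu, 0 < x)
    (hn : ¬∃ x, AbacusMove k mu x) (p : ℕ) :
    p ∈ mu ↔ (p % k ≠ 0 ∧ (p / k : ℤ) < JM k mu (p % k)) := by
  have hI : ∀ q ∈ mu, k < q → q - k ∈ mu := by
    intro q hq hkq
    by_contra hc
    exact hn ⟨_, Or.inl ⟨q, hq, hkq, hc, rfl⟩⟩
  have hIa : k ∉ mu := fun hmem => hn ⟨_, Or.inr (Or.inl ⟨hmem, rfl⟩)⟩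
  have hII : ∀ a ∈ mu, ∀ b ∈ mu, a + b = k → a = b := by
    intro a ha b hb hs
    by_contra hc
    exact hn ⟨_, Or.inr (Or.inr ⟨a, ha, b, hb, hc, hs, rfl⟩)⟩
  have h1 : ∀ q, q ∈ mu → q % k ≠ 0 := by
    intro q
    induction q using Nat.strong_induction_on with
    | _ q ih =>
      intro hq hq0
      have hqpos : 0 < q := hpos q hq
      have hqk : k ≤ q := by
        by_contra hlt
        push_neg at hlt
        rw [Nat.mod_eq_of_lt hlt] at hq0
        omega
      rcases eq_or_lt_of_le hqk with he | hl
      · exact hIa (he ▸ hq)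
      · have hmem := hI q hq hl
        have h' : (q - k) % k = q % k := by
          conv_rhs => rw [← Nat.sub_add_cancel hqk]
          rw [Nat.add_mod_right]
        exact ih (q - k) (by omega) hmem (h'.trans hq0)
  have main : ∀ r, 0 < r → r < k → ∀ i, (k * i + r ∈ mu ↔ i < cntM k mu r) := by
    intro r hr0 hrk
    have hmodv : ∀ i : ℕ, (k * i + r) % k = r := by
      intro i
      rw [Nat.mul_add_mod, Nat.mod_eq_of_lt hrk]
    have hdivv : ∀ i : ℕ, (k * i + r) / k = i := by
      intro i
      rw [Nat.mul_add_div (by omega), Nat.div_eq_of_lt hrk, add_zero]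
    set T := (mu.filter (fun x => x % k = r)).image (fun x => x / k) with hT
    have hmemT : ∀ i, i ∈ T ↔ k * i + r ∈ mu := by
      intro i
      constructor
      · intro hi
        obtain ⟨x, hx, hxi⟩ := Finset.mem_image.mp hi
        obtain ⟨hxmu, hxr⟩ := Finset.mem_filter.mp hx
        have hx' : k * (x / k) + x % k = x := Nat.div_add_mod x k
        rw [hxi, hxr] at hx'
        exact hx' ▸ hxmu
      · intro hx
        exact Finset.mem_image.mpr ⟨k * i + r, Finset.mem_filter.mpr ⟨hx, hmodv i⟩, hdivv i⟩
    have aux : ∀ d j, k * (j + d) + r ∈ mu → k * j + r ∈ mu := by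
      intro d
      induction d with
      | zero => intro j h; simpa using h
      | succ d ih =>
        intro j h
        apply ih
        have he : k * (j + (d + 1)) + r = (k * (j + d) + r) + k := by ring
        rw [he] at h
        have := hI _ h (by omega)
        simpa using this
    have hdc : ∀ i ∈ T, ∀ j, j < i → j ∈ T := by
      intro i hi j hj
      rw [hmemT] at hi ⊢
      have h' : k * (j + (i - j)) + r ∈ mu := by
        rw [Nat.add_sub_cancel' hj.le]
        exact hi
      exact aux _ _ h'
    have hcard : T.card = cntM k mu r := by
      rw [hT]
      unfold cntM
      apply Finset.card_image_of_injOn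
      intro x hx y hy hxy
      simp only [Finset.coe_filter, Set.mem_setOf_eq, Finset.mem_coe, Finset.mem_filter] at hx hy
      have ex : k * (x / k) + x % k = x := Nat.div_add_mod x k
      have ey : k * (y / k) + y % k = y := Nat.div_add_mod y k
      have hxy' : x / k = y / k := hxy
      rw [hxy', hx.2] at ex
      rw [hy.2] at ey
      omega
    intro i
    rw [← hmemT, dc_mem_iff hdc, hcard]
  have charCnt : ∀ q, q ∈ mu ↔ (q % k ≠ 0 ∧ q / k < cntM k mu (q % k)) := by
    intro q
    constructor
    · intro hq
      have hr := h1 q hq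
      refine ⟨hr, ?_⟩
      apply (main (q % k) (Nat.pos_of_ne_zero hr) (Nat.mod_lt q (by omega)) (q / k)).mp
      rw [Nat.div_add_mod]
      exact hq
    · rintro ⟨hr, hlt⟩
      have := (main (q % k) (Nat.pos_of_ne_zero hr) (Nat.mod_lt q (by omega)) (q / k)).mpr hlt
      rwa [Nat.div_add_mod] at this
  have hpair : ∀ r, 0 < r → r < k → 2 * r ≠ k → cntM k mu r = 0 ∨ cntM k mu (k - r) = 0 := by
    intro r hr0 hrk h2
    by_contra hc
    push_neg at hc
    have hr' : r ∈ mu := by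
      have := (main r hr0 hrk 0).mpr (by omega)
      simpa using this
    have hkr : k - r ∈ mu := by
      have := (main (k - r) (by omega) (by omega) 0).mpr (by omega)
      simpa using this
    have := hII r hr' (k - r) hkr (by omega)
    omega
  have key : p % k ≠ 0 → ∀ i : ℕ, ((i : ℤ) < JM k mu (p % k) ↔ i < cntM k mu (p % k)) := by
    intro hr i
    have hr0 : 0 < p % k := Nat.pos_of_ne_zero hr
    have hrk : p % k < k := Nat.mod_lt p (by omega)
    unfold JM
    by_cases h2 : 2 * (p % k) = k
    · rw [if_pos h2]
      omega
    · rw [if_neg h2]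
      have := hpair (p % k) hr0 hrk h2
      omega
  rw [charCnt p]
  constructor
  · rintro ⟨hr, h⟩
    exact ⟨hr, (key hr (p / k)).mpr h⟩
  · rintro ⟨hr, h⟩
    exact ⟨hr, (key hr (p / k)).mp h⟩

/-- Every maximal sequence of `k`-abacus moves from a strict partition `λ`
terminates (there is no infinite sequence of moves), and all maximal move sequences from `λ`
terminate at the same strict partition: the `k`-core of `λ` is unique. -/
theorem stmt5 (k : ℕ) (hk : 1 ≤ k) (lam : Finset ℕ) (hlam : IsStrictPartitionM lam) :
    (¬∃ f : ℕ → Finset ℕ, f 0 = lam ∧ ∀ n, AbacusMove k (f n) (f (n + 1))) ∧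
    (∀ mu₁ mu₂ : Finset ℕ,
      Relation.ReflTransGen (AbacusMove k) lam mu₁ →
      Relation.ReflTransGen (AbacusMove k) lam mu₂ →
      (¬∃ x, AbacusMove k mu₁ x) → (¬∃ x, AbacusMove k mu₂ x) → mu₁ = mu₂) := by
  constructor
  · rintro ⟨f, hf0, hf⟩
    have hdec : ∀ n, (f (n + 1)).sum id < (f n).sum id := fun n => move_sum_lt hk (hf n)
    have keyn : ∀ n, (f n).sum id + n ≤ (f 0).sum id := by
      intro n
      induction n with
      | zero => omega
      | succ n ih =>
        have := hdec n
        omega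
    have := keyn ((f 0).sum id + 1)
    omega
  · intro mu₁ mu₂ h1 h2 hn1 hn2
    have inv : ∀ {mu : Finset ℕ}, Relation.ReflTransGen (AbacusMove k) lam mu →
        (∀ x ∈ mu, 0 < x) ∧ (∀ r, 0 < r → r < k → JM k mu r = JM k lam r) := by
      intro mu h
      induction h with
      | refl => exact ⟨hlam, fun _ _ _ => rfl⟩
      | tail hab hstep ih =>
        obtain ⟨hp, hJ⟩ := ih
        exact ⟨move_pos hp hstep,
          fun r h0 hK => (J_invariant hk hp hstep r h0 hK).trans (hJ r h0 hK)⟩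
    obtain ⟨hp1, hJ1⟩ := inv h1
    obtain ⟨hp2, hJ2⟩ := inv h2
    ext p
    rw [normal_char hk hp1 hn1 p, normal_char hk hp2 hn2 p]
    by_cases hr : p % k = 0
    · simp [hr]
    · have h0 : 0 < p % k := Nat.pos_of_ne_zero hr
      have hK : p % k < k := Nat.mod_lt p (by omega)
      rw [hJ1 _ h0 hK, hJ2 _ h0 hK]
end
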